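/- Let C ⊆ F_q^{n×m} be an F_q-linear rank-metric code such that dim C(U) is divisible by m for every subspace U ⊆ F_q^n (an m-almost affine rank-metric code). Then the function ρ(U) = (dim C - dim C(U^⊥))/m is integer-valued on all subspaces U, and the associated q-polymatroid M[C] is a q-matroid. -/

import Mathlib

open Matrix

variable {F : Type*} [Field F]

/-- Column space of a matrix: the span of its columns. -/
def colSpace {n m : ℕ} (M : Matrix (Fin n) (Fin m) F) : Submodule F (Fin n → F) :=
  Submodule.span F (Set.range Mᵀ)

lemma colSpace_le_iff {n m : ℕ} (M : Matrix (Fin n) (Fin m) F) (U : Submodule F (Fin n → F)) :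
    colSpace M ≤ U ↔ ∀ j, Mᵀ j ∈ U := by
  rw [colSpace, Submodule.span_le]
  constructor
  · intro h j
    exact h ⟨j, rfl⟩
  · rintro h _ ⟨j, rfl⟩
    exact h j

/-- `C(U)`: the codewords of `C` whose column space is contained in `U`. -/
def codeCU {n m : ℕ} (C : Submodule F (Matrix (Fin n) (Fin m) F))
    (U : Submodule F (Fin n → F)) : Submodule F (Matrix (Fin n) (Fin m) F) where
  carrier := {M | M ∈ C ∧ colSpace M ≤ U}
  add_mem' := by
    rintro a b ⟨haC, ha⟩ ⟨hbC, hb⟩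
    refine ⟨C.add_mem haC hbC, (colSpace_le_iff _ _).2 fun j => ?_⟩
    have h := U.add_mem ((colSpace_le_iff a U).1 ha j) ((colSpace_le_iff b U).1 hb j)
    exact h
  zero_mem' := by
    exact ⟨C.zero_mem, (colSpace_le_iff _ _).2 fun j => U.zero_mem⟩
  smul_mem' := by
    rintro c a ⟨haC, ha⟩
    refine ⟨C.smul_mem c haC, (colSpace_le_iff _ _).2 fun j => ?_⟩
    have h := U.smul_mem c ((colSpace_le_iff a U).1 ha j)
    exact h

/-- Orthogonal complement with respect to the standard (dot-product) bilinear form. -/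
def perp {n : ℕ} (U : Submodule F (Fin n → F)) : Submodule F (Fin n → F) where
  carrier := {v | ∀ u ∈ U, v ⬝ᵥ u = 0}
  add_mem' := by
    intro a b ha hb u hu
    rw [add_dotProduct, ha u hu, hb u hu, add_zero]
  zero_mem' := by
    intro u hu
    rw [zero_dotProduct]
  smul_mem' := by
    intro c a ha u hu
    rw [smul_dotProduct, ha u hu, smul_zero]

/-- The minimum rank distance of a matrix code. -/
noncomputable def minRankDist {n m : ℕ} (C : Submodule F (Matrix (Fin n) (Fin m) F)) : ℕ :=
  sInf {r : ℕ | ∃ M ∈ C, M ≠ 0 ∧ M.rank = r}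

/-- The rank function of the q-polymatroid associated to a matrix rank-metric code. -/
noncomputable def rhoCode {n m : ℕ} (C : Submodule F (Matrix (Fin n) (Fin m) F))
    (U : Submodule F (Fin n → F)) : ℚ :=
  ((Module.finrank F C : ℚ) - (Module.finrank F (codeCU C (perp U)) : ℚ)) / (m : ℚ)

/-! The codewords with column space in `U^⊥` form the kernel of the map sending `M ∈ C` to the
linear map `U → F^m`, `u ↦ u M`; rank–nullity in `Hom(U, F^m)` gives `0 ≤ ρ(U) ≤ dim U`. Since
`C(U^⊥) ∩ C(V^⊥) = C((U + V)^⊥)` and `C(U^⊥) + C(V^⊥) ⊆ C((U ∩ V)^⊥)`, the dimension formula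
for subspaces makes `U ↦ dim C(U^⊥)` supermodular, i.e. `ρ` submodular. -/

theorem LinearMap.finrank_le_finrank_inf_ker_add {K V W : Type*} [Field K] [AddCommGroup V]
    [Module K V] [AddCommGroup W] [Module K W] [FiniteDimensional K V] [FiniteDimensional K W]
    (f : V →ₗ[K] W) (C : Submodule K V) :
    Module.finrank K C ≤ Module.finrank K ↥(C ⊓ LinearMap.ker f) + Module.finrank K W := by
  have hker : Module.finrank K (LinearMap.ker (f.domRestrict C)) =
      Module.finrank K ↥(C ⊓ LinearMap.ker f) := by
    rw [LinearMap.ker_domRestrict, ← Submodule.map_comap_subtype,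
      Submodule.finrank_map_subtype_eq]
  have := LinearMap.finrank_range_add_finrank_ker (f.domRestrict C)
  have := Submodule.finrank_le (LinearMap.range (f.domRestrict C))
  omega

section

variable {n m : ℕ}

lemma perp_antitone {U V : Submodule F (Fin n → F)} (h : U ≤ V) : perp V ≤ perp U :=
  fun _ hv u hu => hv u (h hu)

lemma perp_sup (U V : Submodule F (Fin n → F)) : perp (U ⊔ V) = perp U ⊓ perp V := by
  refine le_antisymm (le_inf (perp_antitone le_sup_left) (perp_antitone le_sup_right)) ?_
  rintro _ ⟨hU, hV⟩ w hw
  obtain ⟨x, hx, y, hy, rfl⟩ := Submodule.mem_sup.1 hw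
  rw [dotProduct_add, hU x hx, hV y hy, add_zero]

lemma colSpace_le_perp_iff (M : Matrix (Fin n) (Fin m) F) (U : Submodule F (Fin n → F)) :
    colSpace M ≤ perp U ↔ ∀ u ∈ U, u ᵥ* M = 0 := by
  simp only [colSpace_le_iff, perp, Submodule.mem_mk, AddSubmonoid.mem_mk,
    AddSubsemigroup.mem_mk, Set.mem_ofPred_eq, ← mulVec_transpose, funext_iff, Pi.zero_apply]
  exact ⟨fun h u hu j => h j u hu, fun h j u hu => h u hu j⟩

variable (C : Submodule F (Matrix (Fin n) (Fin m) F))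

lemma codeCU_top : codeCU C ⊤ = C := by
  ext M
  simp [codeCU]

lemma codeCU_mono {U V : Submodule F (Fin n → F)} (h : U ≤ V) : codeCU C U ≤ codeCU C V :=
  fun _ hM => ⟨hM.1, hM.2.trans h⟩

lemma codeCU_inf (U V : Submodule F (Fin n → F)) :
    codeCU C (U ⊓ V) = codeCU C U ⊓ codeCU C V := by
  ext M
  change M ∈ C ∧ _ ≤ _ ↔ (M ∈ C ∧ _ ≤ _) ∧ (M ∈ C ∧ _ ≤ _)
  rw [le_inf_iff]
  tauto

noncomputable def vecMulRestrict (U : Submodule F (Fin n → F)) :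
    Matrix (Fin n) (Fin m) F →ₗ[F] (U →ₗ[F] (Fin m → F)) where
  toFun M := M.vecMulLinear.comp U.subtype
  map_add' A B := by
    ext u
    simp
  map_smul' c A := by
    ext u
    simp

lemma codeCU_perp_eq_inf_ker (U : Submodule F (Fin n → F)) :
    codeCU C (perp U) = C ⊓ LinearMap.ker (vecMulRestrict (m := m) U) := by
  ext M
  change M ∈ C ∧ _ ↔ _
  rw [Submodule.mem_inf, colSpace_le_perp_iff, LinearMap.mem_ker, LinearMap.ext_iff,
    Subtype.forall]
  rfl

lemma finrank_codeCU_perp_le (U : Submodule F (Fin n → F)) :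
    Module.finrank F (codeCU C (perp U)) ≤ Module.finrank F C :=
  Submodule.finrank_mono fun _ hM => hM.1

lemma finrank_le_finrank_codeCU_perp_add (U : Submodule F (Fin n → F)) :
    Module.finrank F C ≤ Module.finrank F (codeCU C (perp U)) + Module.finrank F U * m := by
  have h := (vecMulRestrict (m := m) U).finrank_le_finrank_inf_ker_add C
  rwa [← codeCU_perp_eq_inf_ker, Module.finrank_linearMap, Module.finrank_fin_fun] at h

lemma finrank_codeCU_perp_antitone {U V : Submodule F (Fin n → F)} (h : U ≤ V) :
    Module.finrank F (codeCU C (perp V)) ≤ Module.finrank F (codeCU C (perp U)) :=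
  Submodule.finrank_mono (codeCU_mono C (perp_antitone h))

lemma finrank_codeCU_perp_add_le (U V : Submodule F (Fin n → F)) :
    Module.finrank F (codeCU C (perp U)) + Module.finrank F (codeCU C (perp V)) ≤
      Module.finrank F (codeCU C (perp (U ⊓ V))) +
        Module.finrank F (codeCU C (perp (U ⊔ V))) := by
  have hsup : codeCU C (perp U) ⊔ codeCU C (perp V) ≤ codeCU C (perp (U ⊓ V)) :=
    sup_le (codeCU_mono C (perp_antitone inf_le_left))
      (codeCU_mono C (perp_antitone inf_le_right))
  rw [← Submodule.finrank_sup_add_finrank_inf_eq, ← codeCU_inf, ← perp_sup]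
  exact Nat.add_le_add_right (Submodule.finrank_mono hsup) _

lemma rhoCode_nonneg (U : Submodule F (Fin n → F)) : 0 ≤ rhoCode C U := by
  have := finrank_codeCU_perp_le C U
  unfold rhoCode
  exact div_nonneg (sub_nonneg.2 (by exact_mod_cast this)) m.cast_nonneg

lemma rhoCode_le_finrank (U : Submodule F (Fin n → F)) :
    rhoCode C U ≤ Module.finrank F U := by
  have := finrank_le_finrank_codeCU_perp_add C U
  refine div_le_of_le_mul₀ m.cast_nonneg (Nat.cast_nonneg _) ?_
  rw [sub_le_iff_le_add']
  exact_mod_cast this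

lemma rhoCode_mono {U V : Submodule F (Fin n → F)} (h : U ≤ V) : rhoCode C U ≤ rhoCode C V := by
  have := finrank_codeCU_perp_antitone C h
  unfold rhoCode
  gcongr

lemma rhoCode_inf_add_rhoCode_sup_le (U V : Submodule F (Fin n → F)) :
    rhoCode C (U ⊓ V) + rhoCode C (U ⊔ V) ≤ rhoCode C U + rhoCode C V := by
  have : (Module.finrank F (codeCU C (perp U)) + Module.finrank F (codeCU C (perp V)) : ℚ) ≤
      Module.finrank F (codeCU C (perp (U ⊓ V))) +
        Module.finrank F (codeCU C (perp (U ⊔ V))) := by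
    exact_mod_cast finrank_codeCU_perp_add_le C U V
  simp only [rhoCode, ← add_div]
  exact div_le_div_of_nonneg_right (by linarith) m.cast_nonneg

lemma exists_rhoCode_eq_intCast {U : Submodule F (Fin n → F)} (hC : m ∣ Module.finrank F C)
    (hU : m ∣ Module.finrank F (codeCU C (perp U))) : ∃ z : ℤ, rhoCode C U = z := by
  refine ⟨((Module.finrank F C : ℤ) - Module.finrank F (codeCU C (perp U))) / m, ?_⟩
  rw [Int.cast_div_charZero (dvd_sub (Int.natCast_dvd_natCast.2 hC)
    (Int.natCast_dvd_natCast.2 hU))]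
  push_cast
  rfl

end

theorem almost_affine_qmatroid_general {n m : ℕ}
    (C : Submodule F (Matrix (Fin n) (Fin m) F))
    (hdiv : ∀ U : Submodule F (Fin n → F), m ∣ Module.finrank F (codeCU C U)) :
    (∀ U : Submodule F (Fin n → F), ∃ z : ℤ, rhoCode C U = (z : ℚ)) ∧
    (∀ U : Submodule F (Fin n → F),
      0 ≤ rhoCode C U ∧ rhoCode C U ≤ (Module.finrank F U : ℚ)) ∧
    (∀ U V : Submodule F (Fin n → F), U ≤ V → rhoCode C U ≤ rhoCode C V) ∧
    (∀ U V : Submodule F (Fin n → F),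
      rhoCode C (U ⊓ V) + rhoCode C (U ⊔ V) ≤ rhoCode C U + rhoCode C V) := by
  have hC : m ∣ Module.finrank F C := codeCU_top C ▸ hdiv ⊤
  exact ⟨fun _ => exists_rhoCode_eq_intCast C hC (hdiv _),
    fun U => ⟨rhoCode_nonneg C U, rhoCode_le_finrank C U⟩,
    fun _ _ => rhoCode_mono C, rhoCode_inf_add_rhoCode_sup_le C⟩

/-- for an `m`-almost affine rank-metric code, the rank function of `M[C]` is
integer-valued and `M[C]` is a q-matroid (the q-rank axioms hold). -/
theorem almost_affine_qmatroid [Fintype F] {n m : ℕ} (hm : 0 < m)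
    (C : Submodule F (Matrix (Fin n) (Fin m) F))
    (hdiv : ∀ U : Submodule F (Fin n → F), m ∣ Module.finrank F (codeCU C U)) :
    (∀ U : Submodule F (Fin n → F), ∃ z : ℤ, rhoCode C U = (z : ℚ)) ∧
    (∀ U : Submodule F (Fin n → F),
      0 ≤ rhoCode C U ∧ rhoCode C U ≤ (Module.finrank F U : ℚ)) ∧
    (∀ U V : Submodule F (Fin n → F), U ≤ V → rhoCode C U ≤ rhoCode C V) ∧
    (∀ U V : Submodule F (Fin n → F),
      rhoCode C (U ⊓ V) + rhoCode C (U ⊔ V) ≤ rhoCode C U + rhoCode C V) :=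
  almost_affine_qmatroid_general C hdiv
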